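/- arXiv:2009.00927 — 3 statements merged into one kernel-verified Lean document; each statement's English description precedes it below -/
import Mathlib

section
/- For all q in [√91/20, 1/2] and all real α, -73728√(1-4q²)·α - 525π²(-16 - α² + 14q(2+q)(1+α²)) ≤ 0. -/
set_option maxHeartbeats 1000000 in
theorem stmt_5 : ∀ q : ℝ, q ∈ Set.Icc (Real.sqrt 91 / 20) (1 / 2) → ∀ α : ℝ,
    -73728 * Real.sqrt (1 - 4 * q ^ 2) * α
      - 525 * Real.pi ^ 2 * (-16 - α ^ 2 + 14 * q * (2 + q) * (1 + α ^ 2)) ≤ 0 := by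
  intro q hq α
  obtain ⟨hql, hqr⟩ := hq
  have h91 : (Real.sqrt 91) ^ 2 = 91 := Real.sq_sqrt (by norm_num)
  have hs91 : Real.sqrt 91 ≥ 9.5 := by
    nlinarith [Real.sqrt_nonneg 91, h91]
  have hq0 : q ≥ 0.475 := by linarith
  have hq2 : q ^ 2 ≥ 91 / 400 := by nlinarith
  have hqr' : q ≤ 1 / 2 := by linarith
  set s := Real.sqrt (1 - 4 * q ^ 2) with hsdef
  have hs0 : 0 ≤ s := Real.sqrt_nonneg _
  have hs2 : s ^ 2 = 1 - 4 * q ^ 2 := Real.sq_sqrt (by nlinarith)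
  have hpi : Real.pi ≥ 3.14159 := by
    have := Real.pi_gt_d6; linarith
  have hpi0 : (0:ℝ) < Real.pi := by linarith
  have hpi2 : Real.pi ^ 2 ≥ 9.8695 := by nlinarith
  have hpi4 : Real.pi ^ 4 ≥ 97.40 := by nlinarith
  have hD : 14 * q * (2 + q) - 1 > 0 := by nlinarith
  have hE : 14 * q * (2 + q) - 16 > 0 := by nlinarith
  have hdisc : 73728 ^ 2 * (1 - 4 * q ^ 2) ≤
      1102500 * Real.pi ^ 4 * ((14 * q * (2 + q) - 1) * (14 * q * (2 + q) - 16)) := by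
    have key : 107373000 * ((14 * q * (2 + q) - 1) * (14 * q * (2 + q) - 16))
        ≥ 73728 ^ 2 * (1 - 4 * q ^ 2) := by
      nlinarith [sq_nonneg (q - 1/2), sq_nonneg (q - 0.475), mul_nonneg (by linarith : (0:ℝ) ≤ q - 0.475) (by linarith : (0:ℝ) ≤ 1/2 - q), sq_nonneg ((q - 0.475) * (q - 1/2))]
    nlinarith [mul_pos hD hE, key]
  set X : ℝ := 525 * Real.pi ^ 2 * (14 * q * (2 + q) - 1) * α ^ 2 + 73728 * s * α
      + 525 * Real.pi ^ 2 * (14 * q * (2 + q) - 16) with hX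
  have hDp : (0:ℝ) < 4 * (525 * Real.pi ^ 2 * (14 * q * (2 + q) - 1)) := by positivity
  have expand : 4 * (525 * Real.pi ^ 2 * (14 * q * (2 + q) - 1)) * X
      = (2 * (525 * Real.pi ^ 2 * (14 * q * (2 + q) - 1)) * α + 73728 * s) ^ 2
        + (1102500 * Real.pi ^ 4 * ((14 * q * (2 + q) - 1) * (14 * q * (2 + q) - 16))
            - 73728 ^ 2 * s ^ 2) := by rw [hX]; ring
  have h2 : 0 ≤ 4 * (525 * Real.pi ^ 2 * (14 * q * (2 + q) - 1)) * X := by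
    rw [expand]
    have : 73728 ^ 2 * s ^ 2 ≤ 1102500 * Real.pi ^ 4 *
        ((14 * q * (2 + q) - 1) * (14 * q * (2 + q) - 16)) := by rw [hs2]; exact hdisc
    nlinarith [sq_nonneg (2 * (525 * Real.pi ^ 2 * (14 * q * (2 + q) - 1)) * α + 73728 * s)]
  have hXnn : 0 ≤ X := by
    by_contra h
    push_neg at h
    nlinarith [mul_pos hDp (neg_pos.mpr h)]
  have hEq : -73728 * s * α
      - 525 * Real.pi ^ 2 * (-16 - α ^ 2 + 14 * q * (2 + q) * (1 + α ^ 2)) = -X := by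
    rw [hX]; ring
  linarith [hXnn, hEq.le, hEq.ge]
end

section
/- The function f(p) = -95482233 + 127309644p - 42257600pπ² + 18110400p²π² - 18110400(-1 + 2√((1-p)p))π² is strictly increasing on [0.65, (1423 + 10√1729)/1945] and satisfies f((1423 + 10√1729)/1945) < 0; hence f(p) < 0 on this interval. -/
/-!
Write `c` for `π²`. The derivative of `f` is
`127309644 - 42257600 c + 36220800 c p + 18110400 c (2p - 1) / √((1 - p) p)`, and every
`p`-dependent term is increasing on `[1/2, 1)`; since `(2p - 1) / √((1 - p) p) ≥ 1/2` at
`p = 0.65`, the derivative is at least `127309644 - 9658880 c > 0` on `(0.65, 1)` for `c ≤ 13`.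
The right endpoint lies in `[0.9, 0.95]`, where dropping the square-root term leaves a value
whose coefficient of `c` is below `-5·10⁶`, which beats the constant term once `c ≥ 9`.
-/

open Real Set

noncomputable def arcLeadingCoeff (c p : ℝ) : ℝ :=
  -95482233 + 127309644 * p - 42257600 * p * c + 18110400 * p ^ 2 * c
    - 18110400 * (-1 + 2 * √((1 - p) * p)) * c

theorem monotoneOn_two_mul_sub_one_div_sqrt :
    MonotoneOn (fun p : ℝ => (2 * p - 1) / √((1 - p) * p)) (Ico (1 / 2) 1) := by
  rintro x ⟨hx0, -⟩ y ⟨-, hy1⟩ hxy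
  have hy : 0 < (1 - y) * y := mul_pos (by linarith) (by linarith)
  refine div_le_div₀ (by linarith) (by linarith) (sqrt_pos.2 hy) (sqrt_le_sqrt ?_)
  nlinarith

theorem hasDerivAt_arcLeadingCoeff (c : ℝ) {x : ℝ} (hx0 : 0 < x) (hx1 : x < 1) :
    HasDerivAt (arcLeadingCoeff c)
      (127309644 - 42257600 * c + 36220800 * c * x
        + 18110400 * c * ((2 * x - 1) / √((1 - x) * x))) x := by
  have hu : 0 < (1 - x) * x := mul_pos (by linarith) hx0
  have hsqrt := (((hasDerivAt_id' x).const_sub 1).fun_mul (hasDerivAt_id' x)).sqrt hu.ne'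
  have h := ((((hasDerivAt_id' x).const_mul (127309644 - 42257600 * c)).fun_add
    ((hasDerivAt_pow 2 x).const_mul (18110400 * c))).fun_sub
    (hsqrt.const_mul (36220800 * c))).const_add (-95482233 + 18110400 * c)
  have hfun : arcLeadingCoeff c = fun p => -95482233 + 18110400 * c
      + ((127309644 - 42257600 * c) * p + 18110400 * c * p ^ 2 - 36220800 * c * √((1 - p) * p)) := by
    ext p
    simp only [arcLeadingCoeff]
    ring
  rw [hfun]
  refine h.congr_deriv ?_
  have hs : √((1 - x) * x) ≠ 0 := (sqrt_pos.2 hu).ne'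
  push_cast
  field_simp
  ring

theorem strictMonoOn_arcLeadingCoeff {c : ℝ} (hc0 : 0 ≤ c) (hc : c ≤ 13) :
    StrictMonoOn (arcLeadingCoeff c) (Icc 0.65 1) := by
  refine strictMonoOn_of_deriv_pos (convex_Icc _ _) ?_ fun x hx => ?_
  · unfold arcLeadingCoeff
    fun_prop
  rw [interior_Icc] at hx
  obtain ⟨hx0, hx1⟩ := hx
  have hq : 1 / 2 ≤ (2 * x - 1) / √((1 - x) * x) := calc
    (1 / 2 : ℝ) ≤ (2 * 0.65 - 1) / √((1 - 0.65) * 0.65) := by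
      have : √((1 - 0.65) * 0.65 : ℝ) ≤ 0.6 := sqrt_le_iff.2 ⟨by norm_num, by norm_num⟩
      rw [le_div_iff₀ (sqrt_pos.2 (by norm_num))]
      linarith
    _ ≤ (2 * x - 1) / √((1 - x) * x) :=
      monotoneOn_two_mul_sub_one_div_sqrt ⟨by norm_num, by norm_num⟩
        ⟨by linarith, hx1⟩ hx0.le
  rw [(hasDerivAt_arcLeadingCoeff c (by linarith) hx1).deriv]
  nlinarith [mul_le_mul_of_nonneg_left hq hc0, mul_le_mul_of_nonneg_left hx0.le hc0]

theorem arcLeadingCoeff_neg {c p : ℝ} (hc : 9 ≤ c) (hp0 : 0.9 ≤ p) (hp1 : p ≤ 0.95) :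
    arcLeadingCoeff c p < 0 := by
  have hquad : 18110400 * p ^ 2 - 42257600 * p + 18110400 ≤ -5000000 := by nlinarith
  have hsqrt : 0 ≤ c * √((1 - p) * p) := by positivity
  unfold arcLeadingCoeff
  nlinarith [mul_le_mul_of_nonneg_left hquad (by linarith : (0 : ℝ) ≤ c)]

theorem stmt_11 (f : ℝ → ℝ)
    (hf : ∀ p, f p = -95482233 + 127309644 * p - 42257600 * p * Real.pi ^ 2
      + 18110400 * p ^ 2 * Real.pi ^ 2
      - 18110400 * (-1 + 2 * Real.sqrt ((1 - p) * p)) * Real.pi ^ 2) :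
    StrictMonoOn f (Set.Icc (0.65 : ℝ) ((1423 + 10 * Real.sqrt 1729) / 1945)) ∧
    f ((1423 + 10 * Real.sqrt 1729) / 1945) < 0 ∧
    ∀ p ∈ Set.Icc (0.65 : ℝ) ((1423 + 10 * Real.sqrt 1729) / 1945), f p < 0 := by
  obtain rfl : f = arcLeadingCoeff (π ^ 2) := funext hf
  set b := (1423 + 10 * √1729) / 1945
  have h41 : 41 < √1729 := lt_sqrt_of_sq_lt (by norm_num)
  have h42 : √1729 < 42 := (sqrt_lt' (by norm_num)).2 (by norm_num)
  have hb0 : 0.9 ≤ b := by rw [le_div_iff₀ (by norm_num)]; linarith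
  have hb1 : b ≤ 0.95 := by rw [div_le_iff₀ (by norm_num)]; linarith
  have hpi9 : 9 ≤ π ^ 2 := by nlinarith [pi_gt_three]
  have hpi13 : π ^ 2 ≤ 13 := by nlinarith [pi_lt_d2, pi_pos]
  have hmono : StrictMonoOn (arcLeadingCoeff (π ^ 2)) (Icc 0.65 b) :=
    (strictMonoOn_arcLeadingCoeff (by positivity) hpi13).mono
      (Icc_subset_Icc le_rfl (by linarith))
  have hneg : arcLeadingCoeff (π ^ 2) b < 0 := arcLeadingCoeff_neg hpi9 hb0 hb1
  exact ⟨hmono, hneg, fun p hp =>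
    (hmono.monotoneOn hp (right_mem_Icc.2 (by linarith)) hp.2).trans_lt hneg⟩
end

section
/- For an obtuse or right triangle with vertices (0,0), (1,0), (p,q) where q ≤ 0.156, (p-1/2)² + q² ≤ 1/4, p ≥ 1/2, and q > 0, the ratio of the second to first Dirichlet eigenvalue satisfies λ₂/λ₁ ≤ 7/3, assuming the bounds λ₂ ≤ π²(1 + (4q²)^(1/3))³/q² and λ₁ ≥ π²(1 + 1/q)². -/
lemma key_alg (q r : ℝ) (hq : 0 < q) (hq' : q ≤ 0.156) (hr : 0 ≤ r)
    (hcube : r ^ 3 = 4 * q ^ 2) : 3 * (1 + r) ^ 3 ≤ 7 * (1 + q) ^ 2 := by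
  have hr47 : r ≤ 0.47 := by
    by_contra h
    push_neg at h
    have := pow_lt_pow_left₀ h (by norm_num : (0:ℝ) ≤ 0.47) (n := 3) (by norm_num)
    nlinarith
  nlinarith [sq_nonneg (r - 0.46), sq_nonneg (q - 0.156), sq_nonneg r, sq_nonneg q,
    mul_nonneg hr hr, mul_nonneg (mul_nonneg hr hr) hr, sq_nonneg (r*q), sq_nonneg (r - q),
    mul_nonneg hr hq.le]

theorem stmt_19 (p q lam1 lam2 : ℝ)
    (hq : 0 < q) (hq' : q ≤ 0.156)
    (hcirc : (p - 1 / 2) ^ 2 + q ^ 2 ≤ 1 / 4) (hp : 1 / 2 ≤ p)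
    (h2 : lam2 ≤ Real.pi ^ 2 * (1 + (4 * q ^ 2) ^ ((1 : ℝ) / 3)) ^ 3 / q ^ 2)
    (h1 : Real.pi ^ 2 * (1 + 1 / q) ^ 2 ≤ lam1) :
    lam2 / lam1 ≤ 7 / 3 := by
  set r := (4 * q ^ 2) ^ ((1 : ℝ) / 3) with hrdef
  have h4q : (0:ℝ) ≤ 4 * q ^ 2 := by positivity
  have hr0 : 0 ≤ r := Real.rpow_nonneg h4q _
  have hcube : r ^ 3 = 4 * q ^ 2 := by
    rw [hrdef, ← Real.rpow_natCast ((4 * q ^ 2) ^ ((1:ℝ)/3)) 3, ← Real.rpow_mul h4q]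
    norm_num
  have hkey := key_alg q r hq hq' hr0 hcube
  have hpi : (0:ℝ) < Real.pi ^ 2 := by positivity
  have hlam1 : 0 < lam1 := lt_of_lt_of_le (by positivity) h1
  rw [div_le_iff₀ hlam1]
  have h1q : Real.pi ^ 2 * (1 + 1 / q) ^ 2 = Real.pi ^ 2 * (1 + q) ^ 2 / q ^ 2 := by
    field_simp; ring
  calc lam2 ≤ Real.pi ^ 2 * (1 + r) ^ 3 / q ^ 2 := h2
    _ ≤ 7 / 3 * (Real.pi ^ 2 * (1 + q) ^ 2 / q ^ 2) := by
        rw [show 7 / 3 * (Real.pi ^ 2 * (1 + q) ^ 2 / q ^ 2)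
            = (7 / 3 * (Real.pi ^ 2 * (1 + q) ^ 2)) / q ^ 2 by ring]
        gcongr ?_ / _
        nlinarith
    _ ≤ 7 / 3 * lam1 := by rw [h1q] at h1; nlinarith
end
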